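/- Fix m = |M| and k. Consider any deterministic node-oblivious decision rule vector (f, g, h) on the k-ary tree satisfying Assumptions 1, 2 and 3, and let d be the diameter of its dependence graph G. Then there exists a constant C = C(f, m, k) < ∞ such that for all depths t, the probability of error satisfies P(σ_root ≠ s) ≥ exp(−C·n^ρ̄), where n = k^t and ρ̄ = 1 + log(1 − k^{−d})/(d·log k) < 1. -/

import Mathlib

/-!
Node-oblivious deterministic decision rules on the `k`-ary tree: every leaf applies the
same rule `g : X → M` to its private signal (i.i.d. with law `p₀` under `s = 0` and
`p₁` under `s = 1`, both everywhere positive on the finite set `X`), every internal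
non-root node applies the same rule `f : Mᵏ → M` to its children's messages, and the
root applies `h : Mᵏ → Bool`.  The state of the world `s` is uniform on `{0,1}`.

We formalize the subexponential lower bound on the error probability under the three
irreducibility assumptions, in terms of the diameter `d` of the dependence graph.
-/

/-- `p` is an everywhere-positive probability distribution on the finite set `X`. -/
def IsPositiveDist {X : Type} [Fintype X] (p : X → ℝ) : Prop :=
  (∀ x, 0 < p x) ∧ ∑ x, p x = 1

/-- Message distribution at a node of level `τ` (distance `τ` from the leaves) for the
node-oblivious deterministic rule vector with leaf rule `g` and internal rule `f`,
when the private signals are i.i.d. with law `p`. -/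
noncomputable def oblDist {X M : Type} [Fintype X] [Fintype M] [DecidableEq M] {k : ℕ}
    (p : X → ℝ) (g : X → M) (f : (Fin k → M) → M) : ℕ → M → ℝ
  | 0, μ => ∑ x, if g x = μ then p x else 0
  | τ + 1, μ => ∑ σ : Fin k → M, if f σ = μ then ∏ i, oblDist p g f τ (σ i) else 0

/-- Root error probability `P(σ_root ≠ s)` (uniform prior on `s`) for the
node-oblivious protocol `(f, g, h)`; the root's children are at level `t`, so the
total depth is `t + 1` and there are `n = k^(t+1)` private signals. -/
noncomputable def oblErr {X M : Type} [Fintype X] [Fintype M] [DecidableEq M] {k : ℕ}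
    (p₀ p₁ : X → ℝ) (g : X → M) (f : (Fin k → M) → M) (h : (Fin k → M) → Bool)
    (t : ℕ) : ℝ :=
  (1 / 2) * (∑ σ : Fin k → M, if h σ = true then ∏ i, oblDist p₀ g f t (σ i) else 0) +
  (1 / 2) * (∑ σ : Fin k → M, if h σ = false then ∏ i, oblDist p₁ g f t (σ i) else 0)

/-- The dependence graph of `f`: there is a directed edge from `μ` to `ν` iff there is
an input vector `α ∈ Mᵏ` in which `ν` appears at least once and `f α = μ`. -/
def DepEdge {M : Type} {k : ℕ} (f : (Fin k → M) → M) (μ ν : M) : Prop :=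
  ∃ α : Fin k → M, (∃ i, α i = ν) ∧ f α = μ

/-- `HasPath f n μ ν`: the dependence graph of `f` contains a directed path with
exactly `n` edges from `μ` to `ν`. -/
def HasPath {M : Type} {k : ℕ} (f : (Fin k → M) → M) : ℕ → M → M → Prop
  | 0, μ, ν => μ = ν
  | n + 1, μ, ν => ∃ ξ, DepEdge f μ ξ ∧ HasPath f n ξ ν

/-- `d` is the diameter of the dependence graph of `f`: every ordered pair of distinct
vertices is joined by a directed path of length at most `d`, and some ordered pair of
distinct vertices has no directed path of length less than `d`. -/
def IsDiameter {M : Type} {k : ℕ} (f : (Fin k → M) → M) (d : ℕ) : Prop :=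
  (∀ μ ν : M, μ ≠ ν → ∃ n, n ≤ d ∧ HasPath f n μ ν) ∧
  (∃ μ ν : M, μ ≠ ν ∧ ∀ n, n < d → ¬HasPath f n μ ν)


/-!
Let `x τ` be the smallest probability under `H₀` of a message at level `τ`. Since `f` is onto,
`x (τ + 1) ≥ x τ ^ k`. Unrolling a path of length `n ≤ d` from any message to `μ₋`, whose
probability stays above `η`, gives the contraction `x (τ + d) ≥ η * x τ ^ K` with `K = k ^ d - 1`.
Hence `-log x t = O(K ^ (t / d))`, and `K ^ (t / d) = n ^ ρ̄` because
`1 + log (1 - k⁻ᵈ) / (d log k) = log K / (d log k)`. The root errs with probability at least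
`½ min (x t, η) ^ k`, the weight of the input in which every child sends `μ₊`.
-/

open Finset Real

lemma pow_pow_le_of_pow_le_succ {R : Type*} [Semiring R] [PartialOrder R] [IsOrderedRing R]
    {z : ℕ → R} {K : ℕ} (h0 : 0 ≤ z 0)
    (hz : ∀ i, z i ^ K ≤ z (i + 1)) (i : ℕ) : z 0 ^ K ^ i ≤ z i := by
  induction i with
  | zero => simp
  | succ i ih =>
    calc z 0 ^ K ^ (i + 1) = (z 0 ^ K ^ i) ^ K := by rw [pow_succ, pow_mul]
      _ ≤ z i ^ K := pow_le_pow_left₀ (by positivity) ih K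
      _ ≤ z (i + 1) := hz i

/-- Since `a ^ K ≤ a * a` for `K ≥ 2`, the sequence `a * y i` satisfies
`(a * y i) ^ K ≤ a * y (i + 1)`: the factor `a` absorbs the loss `η` at every step. -/
lemma mul_pow_pow_le_of_mul_pow_le_succ {y : ℕ → ℝ} {a η : ℝ} {K : ℕ} (ha0 : 0 ≤ a)
    (ha1 : a ≤ 1) (haη : a ≤ η) (hK : 2 ≤ K) (hy0 : ∀ i, 0 ≤ y i)
    (hy : ∀ i, η * y i ^ K ≤ y (i + 1)) (i : ℕ) : (a * y 0) ^ K ^ i ≤ y i := by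
  have hstep : ∀ i, (a * y i) ^ K ≤ a * y (i + 1) := fun i => by
    have hyK : 0 ≤ y i ^ K := pow_nonneg (hy0 i) K
    calc (a * y i) ^ K = a ^ K * y i ^ K := mul_pow a (y i) K
      _ ≤ a ^ 2 * y i ^ K :=
          mul_le_mul_of_nonneg_right (pow_le_pow_of_le_one ha0 ha1 hK) hyK
      _ = a * (a * y i ^ K) := by ring
      _ ≤ a * (η * y i ^ K) := by gcongr
      _ ≤ a * y (i + 1) := by gcongr; exact hy i
  calc (a * y 0) ^ K ^ i ≤ a * y i :=
        pow_pow_le_of_pow_le_succ (z := fun i => a * y i) (mul_nonneg ha0 (hy0 0)) hstep i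
    _ ≤ y i := mul_le_of_le_one_left (hy0 i) ha1

lemma exp_neg_mul_le_pow_div_two {c A w : ℝ} {N : ℕ} (hc0 : 0 < c) (hc1 : c ≤ 1)
    (hN : (N : ℝ) ≤ A * w) (hw : 1 ≤ w) :
    exp (-(A * -log c + log 2) * w) ≤ c ^ N / 2 := by
  have hlogc : log c ≤ 0 := log_nonpos hc0.le hc1
  have hlog2 : 0 < log 2 := log_pos one_lt_two
  have hcN : c ^ N / 2 = exp (N * log c - log 2) := by
    rw [exp_sub, exp_nat_mul, exp_log hc0, exp_log two_pos]
  rw [hcN]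
  gcongr
  nlinarith [mul_le_mul_of_nonpos_right hN hlogc]

lemma exists_forall_exp_neg_mul_le {u w : ℕ → ℝ} (hu : ∀ t, 0 < u t) (hw : ∀ t, 1 ≤ w t)
    {C₀ : ℝ} {T : ℕ} (h : ∀ t, T ≤ t → exp (-C₀ * w t) ≤ u t) :
    ∃ C, ∀ t, exp (-C * w t) ≤ u t := by
  set C := max C₀ (∑ t ∈ range T, |log (u t)|)
  have hC0 : 0 ≤ C := le_max_of_le_right (sum_nonneg fun t _ => abs_nonneg _)
  refine ⟨C, fun t => ?_⟩
  rcases le_or_gt T t with hTt | htT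
  · calc exp (-C * w t) ≤ exp (-C₀ * w t) := by
          gcongr; exacts [(zero_le_one.trans (hw t)), le_max_left _ _]
      _ ≤ u t := h t hTt
  · have hlog : -log (u t) ≤ C :=
      (neg_le_abs _).trans <| (single_le_sum (fun t _ => abs_nonneg (log (u t)))
        (mem_range.mpr htT)).trans (le_max_right _ _)
    calc exp (-C * w t) ≤ exp (log (u t)) := by
          gcongr; nlinarith [hw t]
      _ = u t := exp_log (hu t)

lemma one_add_log_one_sub_inv_div_log {b : ℝ} (hb : 1 < b) :
    1 + log (1 - b⁻¹) / log b = log (b - 1) / log b := by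
  have hlogb : log b ≠ 0 := (log_pos hb).ne'
  have hb0 : b ≠ 0 := by positivity
  rw [show b - 1 = b * (1 - b⁻¹) by field_simp, log_mul hb0 (by
    have : b⁻¹ < 1 := inv_lt_one_of_one_lt₀ hb
    linarith)]
  field_simp

lemma one_add_log_one_sub_inv_div_log_lt_one {b : ℝ} (hb : 1 < b) :
    1 + log (1 - b⁻¹) / log b < 1 := by
  have hlog : log (1 - b⁻¹) < 0 :=
    log_neg (by simpa using inv_lt_one_of_one_lt₀ hb) (by simpa using (by positivity : 0 < b))
  linarith [div_neg_of_neg_of_pos hlog (log_pos hb)]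

lemma pow_le_rpow_log_div_mul_log {k K : ℝ} {d i s : ℕ} (hk : 1 < k) (hd : 0 < d) (hK : 1 ≤ K)
    (hi : i * d ≤ s) : K ^ i ≤ (k ^ s) ^ (log K / (d * log k)) := by
  have hlogk : 0 < log k := log_pos hk
  rw [← rpow_natCast, rpow_def_of_pos (by linarith), rpow_def_of_pos (by positivity), log_pow,
    show (s : ℝ) * log k * (log K / (d * log k)) = s / d * log K by field_simp, mul_comm]
  gcongr
  · exact log_nonneg hK
  · rw [le_div_iff₀ (by positivity)]; exact_mod_cast hi

section Protocol

variable {X M : Type} [Fintype X] [Fintype M] [DecidableEq M] {k : ℕ}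
  {p p' : X → ℝ} {g : X → M} {f : (Fin k → M) → M}

lemma oblDist_zero (μ : M) : oblDist p g f 0 μ = ∑ x with g x = μ, p x :=
  (sum_filter _ _).symm

lemma oblDist_succ (τ : ℕ) (μ : M) :
    oblDist p g f (τ + 1) μ = ∑ σ : Fin k → M with f σ = μ, ∏ i, oblDist p g f τ (σ i) :=
  (sum_filter _ _).symm

lemma oblDist_nonneg (hp : ∀ x, 0 ≤ p x) (τ : ℕ) (μ : M) : 0 ≤ oblDist p g f τ μ := by
  induction τ generalizing μ with
  | zero => rw [oblDist_zero]; exact sum_nonneg fun x _ => hp x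
  | succ τ ih => rw [oblDist_succ]; exact sum_nonneg fun σ _ => prod_nonneg fun i _ => ih _

lemma sum_oblDist (hp : ∑ x, p x = 1) (τ : ℕ) : ∑ μ, oblDist p g f τ μ = 1 := by
  induction τ with
  | zero => simp_rw [oblDist_zero, sum_fiberwise, hp]
  | succ τ ih => simp_rw [oblDist_succ, sum_fiberwise, ← Fintype.sum_pow, ih, one_pow]

lemma oblDist_le_one (hp : IsPositiveDist p) (τ : ℕ) (μ : M) : oblDist p g f τ μ ≤ 1 :=
  calc oblDist p g f τ μ ≤ ∑ ν, oblDist p g f τ ν :=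
        single_le_sum (fun ν _ => oblDist_nonneg (fun x => (hp.1 x).le) τ ν) (mem_univ μ)
    _ = 1 := sum_oblDist hp.2 τ

lemma prod_oblDist_le_oblDist_succ (hp : ∀ x, 0 ≤ p x) (τ : ℕ) (σ : Fin k → M) :
    ∏ i, oblDist p g f τ (σ i) ≤ oblDist p g f (τ + 1) (f σ) := by
  rw [oblDist_succ]
  exact single_le_sum (f := fun σ : Fin k → M => ∏ i, oblDist p g f τ (σ i))
    (fun σ _ => prod_nonneg fun i _ => oblDist_nonneg hp τ (σ i)) (by simp)

lemma oblDist_pos_of_support_subset (hp : ∀ x, 0 ≤ p x) (hp' : ∀ x, 0 ≤ p' x)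
    (hsupp : ∀ x, 0 < p x → 0 < p' x) (τ : ℕ) (μ : M) (hμ : 0 < oblDist p g f τ μ) :
    0 < oblDist p' g f τ μ := by
  induction τ generalizing μ with
  | zero =>
    rw [oblDist_zero, sum_pos_iff_of_nonneg fun x _ => hp x] at hμ
    rw [oblDist_zero, sum_pos_iff_of_nonneg fun x _ => hp' x]
    obtain ⟨x, hx, hpx⟩ := hμ
    exact ⟨x, hx, hsupp x hpx⟩
  | succ τ ih =>
    rw [oblDist_succ, sum_pos_iff_of_nonneg fun σ _ =>
      prod_nonneg fun i _ => oblDist_nonneg hp τ (σ i)] at hμ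
    obtain ⟨σ, hσ, hprod⟩ := hμ
    have hpos : ∀ i, 0 < oblDist p g f τ (σ i) := fun i =>
      (oblDist_nonneg hp τ (σ i)).lt_of_ne
        (prod_ne_zero_iff.mp hprod.ne' i (mem_univ i)).symm
    rw [← (mem_filter.mp hσ).2]
    exact (prod_pos fun i _ => ih (σ i) (hpos i)).trans_le
      (prod_oblDist_le_oblDist_succ hp' τ σ)

lemma pow_div_two_le_oblErr {p₀ p₁ : X → ℝ} (hp₀ : ∀ x, 0 ≤ p₀ x) (hp₁ : ∀ x, 0 ≤ p₁ x)
    (h : (Fin k → M) → Bool) (t : ℕ) (μ : M) {a : ℝ} (ha : 0 ≤ a)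
    (ha₀ : a ≤ oblDist p₀ g f t μ) (ha₁ : a ≤ oblDist p₁ g f t μ) :
    a ^ k / 2 ≤ oblErr p₀ p₁ g f h t := by
  set σ : Fin k → M := fun _ => μ
  have hnonneg : ∀ q : X → ℝ, (∀ x, 0 ≤ q x) → ∀ b : Bool,
      0 ≤ ∑ σ' : Fin k → M, if h σ' = b then ∏ i, oblDist q g f t (σ' i) else 0 :=
    fun q hq b =>
      sum_nonneg fun σ' _ => ite_nonneg (prod_nonneg fun i _ => oblDist_nonneg hq t _) le_rfl
  have hchosen : ∀ q : X → ℝ, (∀ x, 0 ≤ q x) → a ≤ oblDist q g f t μ →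
      a ^ k ≤ ∑ σ' : Fin k → M, if h σ' = h σ then ∏ i, oblDist q g f t (σ' i) else 0 := by
    intro q hq haq
    rw [← sum_filter]
    calc a ^ k ≤ ∏ i, oblDist q g f t (σ i) := by
          simpa [σ] using pow_le_pow_left₀ ha haq k
      _ ≤ _ := single_le_sum (f := fun σ' : Fin k → M => ∏ i, oblDist q g f t (σ' i))
          (fun σ' _ => prod_nonneg fun i _ => oblDist_nonneg hq t _) (by simp)
  have h₀ := hchosen p₀ hp₀ ha₀
  have h₁ := hchosen p₁ hp₁ ha₁
  unfold oblErr
  cases hσ : h σ <;> rw [hσ] at h₀ h₁ <;> linarith [hnonneg p₀ hp₀ true, hnonneg p₁ hp₁ false]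

lemma oblErr_pos {p₀ p₁ : X → ℝ} (hp₀ : IsPositiveDist p₀) (hp₁ : IsPositiveDist p₁)
    (h : (Fin k → M) → Bool) (t : ℕ) : 0 < oblErr p₀ p₁ g f h t := by
  obtain ⟨μ, -, hμ₀⟩ : ∃ μ ∈ univ, (0 : ℝ) < oblDist p₀ g f t μ :=
    exists_lt_of_sum_lt (by simp [sum_oblDist hp₀.2])
  have hμ₁ : 0 < oblDist p₁ g f t μ := oblDist_pos_of_support_subset
    (fun x => (hp₀.1 x).le) (fun x => (hp₁.1 x).le) (fun x _ => hp₁.1 x) t μ hμ₀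
  have ha : 0 < min (oblDist p₀ g f t μ) (oblDist p₁ g f t μ) := lt_min hμ₀ hμ₁
  exact (by positivity : (0 : ℝ) < _ ^ k / 2).trans_le <|
    pow_div_two_le_oblErr (fun x => (hp₀.1 x).le) (fun x => (hp₁.1 x).le) h t μ ha.le
      (min_le_left _ _) (min_le_right _ _)

end Protocol

namespace IsDiameter

variable {M : Type} {k d : ℕ} {f : (Fin k → M) → M}

lemma exists_hasPath_le (hf : IsDiameter f d) (μ ν : M) : ∃ n ≤ d, HasPath f n μ ν := by
  by_cases hμν : μ = ν
  · exact ⟨0, Nat.zero_le d, hμν⟩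
  · obtain ⟨n, hn, hpath⟩ := hf.1 μ ν hμν
    exact ⟨n, hn, hpath⟩

lemma nontrivial (hf : IsDiameter f d) : Nontrivial M :=
  let ⟨μ, ν, hμν, _⟩ := hf.2
  ⟨μ, ν, hμν⟩

/-- The first edge of a path out of `μ` is an input vector `α` with `f α = μ`. -/
lemma surjective (hf : IsDiameter f d) : Function.Surjective f := by
  intro μ
  have := hf.nontrivial
  obtain ⟨ν, hν⟩ := exists_ne μ
  obtain ⟨_ | n, -, hpath⟩ := hf.1 μ ν hν.symm
  · exact absurd hpath hν.symm
  · obtain ⟨-, ⟨α, -, hα⟩, -⟩ := hpath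
    exact ⟨α, hα⟩

end IsDiameter

section Minimum

variable {X M : Type} [Fintype X] [Fintype M] [DecidableEq M] [Nonempty M] {k : ℕ}
  {p : X → ℝ} {g : X → M} {f : (Fin k → M) → M}

noncomputable def oblMin (p : X → ℝ) (g : X → M) (f : (Fin k → M) → M) (τ : ℕ) : ℝ :=
  univ.inf' univ_nonempty (oblDist p g f τ)

lemma le_oblMin_iff {a : ℝ} {τ : ℕ} : a ≤ oblMin p g f τ ↔ ∀ μ, a ≤ oblDist p g f τ μ := by
  simp [oblMin]

lemma oblMin_le (τ : ℕ) (μ : M) : oblMin p g f τ ≤ oblDist p g f τ μ :=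
  inf'_le _ (mem_univ μ)

lemma oblMin_nonneg (hp : ∀ x, 0 ≤ p x) (τ : ℕ) : 0 ≤ oblMin p g f τ :=
  le_oblMin_iff.mpr (oblDist_nonneg hp τ)

lemma oblMin_le_one (hp : IsPositiveDist p) (τ : ℕ) : oblMin p g f τ ≤ 1 :=
  (oblMin_le τ (Classical.arbitrary M)).trans (oblDist_le_one hp τ _)

lemma oblMin_pow_le_oblMin_succ (hp : ∀ x, 0 ≤ p x) (hf : Function.Surjective f) (τ : ℕ) :
    oblMin p g f τ ^ k ≤ oblMin p g f (τ + 1) := by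
  refine le_oblMin_iff.mpr fun μ => ?_
  obtain ⟨σ, rfl⟩ := hf μ
  calc oblMin p g f τ ^ k = ∏ _i : Fin k, oblMin p g f τ := by simp
    _ ≤ ∏ i, oblDist p g f τ (σ i) :=
        prod_le_prod (fun _ _ => oblMin_nonneg hp τ) fun i _ => oblMin_le τ (σ i)
    _ ≤ oblDist p g f (τ + 1) (f σ) := prod_oblDist_le_oblDist_succ hp τ σ

lemma oblMin_pow_pow_le_oblMin_add (hp : ∀ x, 0 ≤ p x) (hf : Function.Surjective f)
    (τ j : ℕ) : oblMin p g f τ ^ k ^ j ≤ oblMin p g f (τ + j) :=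
  pow_pow_le_of_pow_le_succ (z := fun j => oblMin p g f (τ + j)) (oblMin_nonneg hp τ)
    (fun j => oblMin_pow_le_oblMin_succ hp hf (τ + j)) j

lemma oblMin_pos_of_le (hp : ∀ x, 0 ≤ p x) (hf : Function.Surjective f) {τ₀ τ : ℕ}
    (h₀ : ∀ μ, 0 < oblDist p g f τ₀ μ) (hτ : τ₀ ≤ τ) : 0 < oblMin p g f τ := by
  have hpos : 0 < oblMin p g f τ₀ := by simpa [oblMin] using h₀
  calc 0 < oblMin p g f τ₀ ^ k ^ (τ - τ₀) := by positivity
    _ ≤ oblMin p g f (τ₀ + (τ - τ₀)) := oblMin_pow_pow_le_oblMin_add hp hf τ₀ (τ - τ₀)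
    _ = oblMin p g f τ := by rw [Nat.add_sub_cancel' hτ]

/-- Along a path of length `n` from `μ` to `ν`, one child at each of the `n` levels carries the
next message of the path; the other children contribute `k ^ n - 1` factors of the level-`τ`
minimum in all. -/
lemma oblDist_mul_oblMin_pow_le_of_hasPath (hp : ∀ x, 0 ≤ p x) (hf : Function.Surjective f)
    (τ : ℕ) {n : ℕ} {μ ν : M} (hpath : HasPath f n μ ν) :
    oblDist p g f τ ν * oblMin p g f τ ^ (k ^ n - 1) ≤ oblDist p g f (τ + n) μ := by
  induction n generalizing μ with
  | zero => rw [hpath]; simp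
  | succ n ih =>
    obtain ⟨-, ⟨σ, ⟨i₀, rfl⟩, rfl⟩, hrest⟩ := hpath
    set x := oblMin p g f τ
    have hx : 0 ≤ x := oblMin_nonneg hp τ
    have hexp : k ^ n - 1 + k ^ n * (k - 1) = k ^ (n + 1) - 1 := by
      rcases Nat.eq_zero_or_pos k with rfl | hk
      · cases n <;> simp
      · have := Nat.le_mul_of_pos_right (k ^ n) hk
        have := Nat.one_le_pow n k hk
        rw [pow_succ, Nat.mul_sub_one]
        omega
    have hothers : (x ^ k ^ n) ^ (k - 1) ≤ ∏ i ∈ univ.erase i₀, oblDist p g f (τ + n) (σ i) :=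
      calc (x ^ k ^ n) ^ (k - 1) = ∏ _i ∈ univ.erase i₀, x ^ k ^ n := by
            simp [card_erase_of_mem]
        _ ≤ _ := prod_le_prod (fun _ _ => by positivity) fun i _ =>
            (oblMin_pow_pow_le_oblMin_add hp hf τ n).trans (oblMin_le _ _)
    calc oblDist p g f τ ν * x ^ (k ^ (n + 1) - 1)
        = oblDist p g f τ ν * x ^ (k ^ n - 1) * (x ^ k ^ n) ^ (k - 1) := by
          rw [← hexp, pow_add, pow_mul, mul_assoc]
      _ ≤ oblDist p g f (τ + n) (σ i₀) * ∏ i ∈ univ.erase i₀, oblDist p g f (τ + n) (σ i) :=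
          mul_le_mul (ih hrest) hothers (by positivity) (oblDist_nonneg hp _ _)
      _ = ∏ i, oblDist p g f (τ + n) (σ i) :=
          mul_prod_erase univ (fun i => oblDist p g f (τ + n) (σ i)) (mem_univ i₀)
      _ ≤ oblDist p g f (τ + n + 1) (f σ) := prod_oblDist_le_oblDist_succ hp _ σ

/-- The path of length `n ≤ d` from `μ` to `μ₀` is started `d - n` levels above `τ`; the
`k`-fold product bound over those levels makes the estimate uniform in `μ`. -/
lemma oblMin_contract (hp : IsPositiveDist p) (hf : Function.Surjective f) (hk : 0 < k)
    {d : ℕ} {μ₀ : M} (hpaths : ∀ μ, ∃ n ≤ d, HasPath f n μ μ₀) {η : ℝ} {τ : ℕ}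
    (hη : ∀ τ', τ ≤ τ' → η ≤ oblDist p g f τ' μ₀) :
    η * oblMin p g f τ ^ (k ^ d - 1) ≤ oblMin p g f (τ + d) := by
  have hp0 : ∀ x, 0 ≤ p x := fun x => (hp.1 x).le
  refine le_oblMin_iff.mpr fun μ => ?_
  obtain ⟨n, hnd, hpath⟩ := hpaths μ
  have hexp : k ^ (d - n) * (k ^ n - 1) ≤ k ^ d - 1 := by
    have := Nat.one_le_pow (d - n) k hk
    rw [Nat.mul_sub_one, ← pow_add, Nat.sub_add_cancel hnd]
    omega
  have hpad : oblMin p g f τ ^ (k ^ d - 1) ≤ oblMin p g f (τ + (d - n)) ^ (k ^ n - 1) :=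
    calc oblMin p g f τ ^ (k ^ d - 1)
        ≤ (oblMin p g f τ ^ k ^ (d - n)) ^ (k ^ n - 1) := by
          rw [← pow_mul]
          exact pow_le_pow_of_le_one (oblMin_nonneg hp0 τ) (oblMin_le_one hp τ) hexp
      _ ≤ oblMin p g f (τ + (d - n)) ^ (k ^ n - 1) :=
          pow_le_pow_left₀ (pow_nonneg (oblMin_nonneg hp0 τ) _)
            (oblMin_pow_pow_le_oblMin_add hp0 hf τ (d - n)) _
  calc η * oblMin p g f τ ^ (k ^ d - 1)
      ≤ oblDist p g f (τ + (d - n)) μ₀ * oblMin p g f (τ + (d - n)) ^ (k ^ n - 1) :=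
        mul_le_mul (hη _ (Nat.le_add_right τ _)) hpad
          (pow_nonneg (oblMin_nonneg hp0 τ) _) (oblDist_nonneg hp0 _ _)
    _ ≤ oblDist p g f (τ + (d - n) + n) μ :=
        oblDist_mul_oblMin_pow_le_of_hasPath hp0 hf _ hpath
    _ = oblDist p g f (τ + d) μ := by rw [Nat.add_assoc, Nat.sub_add_cancel hnd]

lemma pow_le_oblMin_of_contract (hp : IsPositiveDist p) (hf : Function.Surjective f)
    (hk : 0 < k) {d T : ℕ} (hd : 0 < d) (hK : 2 ≤ k ^ d - 1) {η a : ℝ} (ha0 : 0 ≤ a)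
    (ha1 : a ≤ 1) (haη : a ≤ η)
    (hcontract : ∀ τ, T ≤ τ → η * oblMin p g f τ ^ (k ^ d - 1) ≤ oblMin p g f (τ + d))
    {t : ℕ} (ht : T ≤ t) :
    (a * oblMin p g f T) ^ ((k ^ d - 1) ^ ((t - T) / d) * k ^ d) ≤ oblMin p g f t := by
  have hp0 : ∀ x, 0 ≤ p x := fun x => (hp.1 x).le
  set c := a * oblMin p g f T
  have hc0 : 0 ≤ c := mul_nonneg ha0 (oblMin_nonneg hp0 T)
  have hc1 : c ≤ 1 := mul_le_one₀ ha1 (oblMin_nonneg hp0 T) (oblMin_le_one hp T)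
  set i := (t - T) / d
  set r := (t - T) % d
  have hgrid : c ^ (k ^ d - 1) ^ i ≤ oblMin p g f (T + i * d) := by
    simpa using mul_pow_pow_le_of_mul_pow_le_succ (y := fun j => oblMin p g f (T + j * d))
      ha0 ha1 haη hK (fun j => oblMin_nonneg hp0 _)
      (fun j => by simpa [Nat.succ_mul, Nat.add_assoc] using hcontract (T + j * d) le_self_add) i
  have ht_eq : T + i * d + r = t := by
    have : i * d + r = t - T := Nat.div_add_mod' (t - T) d
    omega
  calc c ^ ((k ^ d - 1) ^ i * k ^ d) ≤ c ^ ((k ^ d - 1) ^ i * k ^ r) :=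
        pow_le_pow_of_le_one hc0 hc1 <| Nat.mul_le_mul_left _ <|
          Nat.pow_le_pow_right hk (Nat.mod_lt _ hd).le
    _ = (c ^ (k ^ d - 1) ^ i) ^ k ^ r := pow_mul _ _ _
    _ ≤ oblMin p g f (T + i * d) ^ k ^ r := pow_le_pow_left₀ (by positivity) hgrid _
    _ ≤ oblMin p g f t := ht_eq ▸ oblMin_pow_pow_le_oblMin_add hp0 hf _ r

theorem exists_forall_ge_exp_neg_mul_rpow_le_oblErr {p₀ p₁ : X → ℝ} (hp₀ : IsPositiveDist p₀)
    (hp₁ : IsPositiveDist p₁) (h : (Fin k → M) → Bool) (hf : Function.Surjective f)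
    (hk : 1 < k) {d : ℕ} (hd : 0 < d) (hK : 2 ≤ k ^ d - 1) {μm μp : M}
    (hpaths : ∀ μ, ∃ n ≤ d, HasPath f n μ μm) {η : ℝ} (hη : 0 < η) {T : ℕ}
    (hA3 : ∀ τ, T ≤ τ → η ≤ oblDist p₀ g f τ μm ∧ η ≤ oblDist p₁ g f τ μp)
    (hT : 0 < oblMin p₀ g f T) :
    ∃ C₀, ∀ t, T ≤ t → exp (-C₀ * ((k : ℝ) ^ (t + 1)) ^
        (log ((k ^ d - 1 : ℕ) : ℝ) / (d * log k))) ≤ oblErr p₀ p₁ g f h t := by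
  have hp₀0 : ∀ x, 0 ≤ p₀ x := fun x => (hp₀.1 x).le
  set a := min η 1
  set c := a * oblMin p₀ g f T
  have hc0 : 0 < c := mul_pos (lt_min hη one_pos) hT
  have hc1 : c ≤ a := mul_le_of_le_one_right (lt_min hη one_pos).le (oblMin_le_one hp₀ T)
  refine ⟨((k ^ (d + 1) : ℕ) : ℝ) * -log c + log 2, fun t ht => ?_⟩
  have hx : c ^ ((k ^ d - 1) ^ ((t - T) / d) * k ^ d) ≤ oblMin p₀ g f t :=
    pow_le_oblMin_of_contract hp₀ hf (by omega) hd hK (lt_min hη one_pos).le (min_le_right _ _)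
      (min_le_left _ _) (fun τ hτ => oblMin_contract hp₀ hf (by omega) hpaths
        fun τ' hτ' => (hA3 τ' (hτ.trans hτ')).1) ht
  have herr : c ^ ((k ^ d - 1) ^ ((t - T) / d) * k ^ (d + 1)) / 2 ≤ oblErr p₀ p₁ g f h t := by
    rw [pow_succ, ← mul_assoc, pow_mul]
    refine pow_div_two_le_oblErr hp₀0 (fun x => (hp₁.1 x).le) h t μp (by positivity)
      (hx.trans (oblMin_le t μp)) ?_
    calc _ ≤ c := pow_le_of_le_one hc0.le (hc1.trans (min_le_right _ _)) (by positivity)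
      _ ≤ η := hc1.trans (min_le_left _ _)
      _ ≤ oblDist p₁ g f t μp := (hA3 t ht).2
  have hgrowth : (((k ^ d - 1) ^ ((t - T) / d) : ℕ) : ℝ) ≤
      ((k : ℝ) ^ (t + 1)) ^ (log ((k ^ d - 1 : ℕ) : ℝ) / (d * log k)) := by
    rw [Nat.cast_pow]
    exact pow_le_rpow_log_div_mul_log (by exact_mod_cast hk) hd
      (by exact_mod_cast (by omega : 1 ≤ k ^ d - 1))
      ((Nat.div_mul_le_self _ _).trans (by omega))
  refine (exp_neg_mul_le_pow_div_two hc0 (hc1.trans (min_le_right _ _)) ?_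
    (one_le_rpow (one_le_pow₀ (by exact_mod_cast hk.le)) (by positivity))).trans herr
  rw [Nat.cast_mul, mul_comm]
  exact mul_le_mul_of_nonneg_left hgrowth (Nat.cast_nonneg _)

end Minimum

theorem node_oblivious_subexponential_lower_bound_general
    (X M : Type) [Fintype X] [Fintype M] [DecidableEq M]
    (k : ℕ)
    (p₀ p₁ : X → ℝ) (hp₀ : IsPositiveDist p₀) (hp₁ : IsPositiveDist p₁)
    (g : X → M) (f : (Fin k → M) → M) (h : (Fin k → M) → Bool)
    (d : ℕ) (hdiam : IsDiameter f d) (hkd : 2 < k ^ d)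
    (τ₀ : ℕ) (hA2 : ∀ μ : M, 0 < oblDist p₀ g f τ₀ μ)
    (μm μp : M) (η : ℝ) (hη : 0 < η) (τd : ℕ)
    (hA3 : ∀ τ, τd < τ → η < oblDist p₀ g f τ μm ∧ η < oblDist p₁ g f τ μp) :
    1 + Real.log (1 - ((k : ℝ) ^ d)⁻¹) / ((d : ℝ) * Real.log k) < 1 ∧
    ∃ C : ℝ, ∀ t : ℕ,
      Real.exp (-C * ((k : ℝ) ^ (t + 1)) ^
          (1 + Real.log (1 - ((k : ℝ) ^ d)⁻¹) / ((d : ℝ) * Real.log k))) ≤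
        oblErr p₀ p₁ g f h t := by
  have hd : 0 < d := Nat.pos_of_ne_zero (by rintro rfl; simp at hkd)
  have hk : 1 < k := (one_lt_pow_iff hd.ne').mp (by omega)
  have hkdR : 1 < (k : ℝ) ^ d := by exact_mod_cast hkd.trans' one_lt_two
  have hρ : 1 + log (1 - ((k : ℝ) ^ d)⁻¹) / (d * log k) =
      log ((k ^ d - 1 : ℕ) : ℝ) / (d * log k) := by
    rw [← log_pow, one_add_log_one_sub_inv_div_log hkdR, Nat.cast_sub (by omega), Nat.cast_pow,
      Nat.cast_one]
  refine ⟨by simpa only [log_pow] using one_add_log_one_sub_inv_div_log_lt_one hkdR, ?_⟩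
  have : Nontrivial M := hdiam.nontrivial
  have hf := hdiam.surjective
  rw [hρ]
  obtain ⟨C₀, hC₀⟩ := exists_forall_ge_exp_neg_mul_rpow_le_oblErr hp₀ hp₁ h hf hk hd (by omega)
    (hdiam.exists_hasPath_le · μm) hη (T := max τ₀ (τd + 1))
    (fun τ hτ => (hA3 τ (by omega)).imp le_of_lt le_of_lt)
    (oblMin_pos_of_le (fun x => (hp₀.1 x).le) hf hA2 (le_max_left _ _))
  exact exists_forall_exp_neg_mul_le (oblErr_pos hp₀ hp₁ h)
    (fun t => one_le_rpow (one_le_pow₀ (by exact_mod_cast hk.le)) (by positivity)) hC₀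

/-- **Subexponential decay for irreducible node-oblivious rules.**  Fix the finite
message alphabet `M` (of size `m`) and `k ≥ 2`.  Consider a deterministic
node-oblivious rule vector `(f, g, h)` with everywhere-positive signal distributions
`p₀, p₁`, satisfying the three irreducibility assumptions:
(1) the dependence graph of `f` is strongly connected;
(2) at some level `τ₀ > 0`, every message has positive probability under `H₀`;
(3) there are messages `μ₋, μ₊` and `η > 0` such that at every level `τ > τ_d`,
`P(σ_i = μ₋ | s = 0) > η` and `P(σ_i = μ₊ | s = 1) > η`.
Let `d` be the diameter of the dependence graph (with `k^d > 2`).  Then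
`ρ̄ = 1 + log (1 - k^{-d}) / (d log k) < 1`, and there is a constant `C < ∞`
(depending on `f`, `m`, `k`) such that for every total depth `t + 1`,
`P(σ_root ≠ s) ≥ exp (-C n^ρ̄)` with `n = k^(t+1)` the number of private signals. -/
theorem node_oblivious_subexponential_lower_bound
    (X M : Type) [Fintype X] [Fintype M] [DecidableEq M]
    (k : ℕ) (hk : 2 ≤ k)
    (p₀ p₁ : X → ℝ) (hp₀ : IsPositiveDist p₀) (hp₁ : IsPositiveDist p₁)
    (g : X → M) (f : (Fin k → M) → M) (h : (Fin k → M) → Bool)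
    (d : ℕ) (hdiam : IsDiameter f d) (hkd : 2 < k ^ d)
    (hA1 : ∀ μ ν : M, μ ≠ ν → ∃ n, HasPath f n μ ν)
    (τ₀ : ℕ) (hτ₀ : 0 < τ₀) (hA2 : ∀ μ : M, 0 < oblDist p₀ g f τ₀ μ)
    (μm μp : M) (η : ℝ) (hη : 0 < η) (τd : ℕ)
    (hA3 : ∀ τ, τd < τ → η < oblDist p₀ g f τ μm ∧ η < oblDist p₁ g f τ μp) :
    1 + Real.log (1 - ((k : ℝ) ^ d)⁻¹) / ((d : ℝ) * Real.log k) < 1 ∧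
    ∃ C : ℝ, ∀ t : ℕ,
      Real.exp (-C * ((k : ℝ) ^ (t + 1)) ^
          (1 + Real.log (1 - ((k : ℝ) ^ d)⁻¹) / ((d : ℝ) * Real.log k))) ≤
        oblErr p₀ p₁ g f h t :=
  node_oblivious_subexponential_lower_bound_general X M k p₀ p₁ hp₀ hp₁ g f h d hdiam hkd τ₀ hA2 μm
    μp η hη τd hA3
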